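/- Let $\theta \in C^2[0,1]$ be a positive non-constant solution of $\mu\theta'' + \theta(m-\theta) = 0$ with Neumann boundary conditions, where $m \in C^1[0,1]$ satisfies: $m' > 0$ on $[0,\rho)$ and $m' < 0$ on $(\rho,1]$ for some $\rho \in (0,1)$, and $\min_{[0,1]} m^+ < \theta < \max_{[0,1]} m$. Then $\theta'$ changes sign at most once in $(0,1)$: either $\theta' > 0$ on $(0,1)$, or $\theta' < 0$ on $(0,1)$, or there exists a unique $x_1 \in (0,1)$ with $\theta' > 0$ on $(0,x_1)$, $\theta'(x_1) = 0$, $\theta''(x_1) < 0$, and $\theta' < 0$ on $(x_1,1)$. -/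

import Mathlib

/-!
Write `g = θ'`; the equation says that `θ''` has the sign of `θ - m`. The point is that at every
interior zero `z` of `g` we have `θ z < m z`, so `θ'' z < 0` and `g` crosses from positive to
negative at `z`; a continuous function all of whose zeros are such crossings vanishes at most once.

Suppose `m z ≤ θ z` with `z < ρ` (`z = ρ` is excluded by `θ < max m = m ρ`). Since
`(θ - m)' z = -m' z < 0`, we get `θ > m`, hence `θ'' > 0` and `g < 0`, just left of `z`. Let `a` be
the last zero of `g` before that (`g 0 = 0` is one). At the ends of the arch `g < 0` on `(a, z)`
the signs of `θ''` give `θ a ≤ m a` and `m z ≤ θ z`, while `θ` decreases and `m` increases on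
`[a, z]`: a contradiction. The case `ρ < z` is the mirror image under `x ↦ 1 - x`.
-/

open Set Filter Topology SignType

section FirstZero

variable {α : Type*} [ConditionallyCompleteLinearOrder α] [TopologicalSpace α] [OrderTopology α]
  [DenselyOrdered α] {g : α → ℝ} {p q : α}

theorem exists_first_zero (hpq : p ≤ q) (hg : ContinuousOn g (Icc p q)) (hp : g p < 0)
    (hq : 0 ≤ g q) : ∃ c ∈ Ioc p q, g c = 0 ∧ ∀ y ∈ Ico p c, g y < 0 := by
  set Z := Icc p q ∩ g ⁻¹' {0}
  have hZ : IsCompact Z := isCompact_Icc.of_isClosed_subset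
    (hg.preimage_isClosed_of_isClosed isClosed_Icc isClosed_singleton) inter_subset_left
  obtain ⟨⟨hpc, hcq⟩, hc⟩ : sInf Z ∈ Z := hZ.sInf_mem (intermediate_value_Icc hpq hg ⟨hp.le, hq⟩)
  refine ⟨sInf Z, ⟨hpc.lt_of_ne ?_, hcq⟩, hc, fun y hy => ?_⟩
  · exact fun hpc => hp.ne (hpc ▸ hc)
  by_contra! hy0
  have hyq : y ≤ q := hy.2.le.trans hcq
  obtain ⟨z, hz, hgz⟩ :=
    intermediate_value_Icc hy.1 (hg.mono (Icc_subset_Icc_right hyq)) ⟨hp.le, hy0⟩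
  exact (csInf_le hZ.bddBelow ⟨⟨hz.1, hz.2.trans hyq⟩, hgz⟩).not_gt (hz.2.trans_lt hy.2)

theorem exists_last_zero (hpq : p ≤ q) (hg : ContinuousOn g (Icc p q)) (hp : 0 ≤ g p)
    (hq : g q < 0) : ∃ c ∈ Ico p q, g c = 0 ∧ ∀ y ∈ Ioc c q, g y < 0 := by
  obtain ⟨c, hc, hgc, hneg⟩ := exists_first_zero (α := αᵒᵈ) (g := g ∘ OrderDual.ofDual)
    (p := OrderDual.toDual q) (q := OrderDual.toDual p) hpq
    (hg.comp continuous_ofDual.continuousOn fun _ hx => ⟨hx.2, hx.1⟩) hq hp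
  exact ⟨OrderDual.ofDual c, ⟨hc.2, hc.1⟩, hgc, fun y hy => hneg (OrderDual.toDual y) ⟨hy.2, hy.1⟩⟩

end FirstZero

def CrossesDownAt (g : ℝ → ℝ) (z : ℝ) : Prop :=
  (∀ᶠ x in 𝓝[<] z, 0 < g x) ∧ ∀ᶠ x in 𝓝[>] z, g x < 0

section CrossesDown

variable {g : ℝ → ℝ} {a b : ℝ}

theorem HasDerivAt.eventually_nhdsLT_lt_of_neg {L z : ℝ} (hg : HasDerivAt g L z) (hL : L < 0) :
    ∀ᶠ x in 𝓝[<] z, g z < g x := by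
  have hslope := (hasDerivAt_iff_tendsto_slope.mp hg).mono_left (nhdsLT_le_nhdsNE z)
  filter_upwards [hslope.eventually (eventually_lt_nhds hL), self_mem_nhdsWithin] with x hx hxz
  rwa [slope_comm, slope_neg_iff_of_le (le_of_lt hxz)] at hx

theorem HasDerivAt.eventually_nhdsGT_gt_of_neg {L z : ℝ} (hg : HasDerivAt g L z) (hL : L < 0) :
    ∀ᶠ x in 𝓝[>] z, g x < g z := by
  have hslope := (hasDerivAt_iff_tendsto_slope.mp hg).mono_left (nhdsGT_le_nhdsNE z)
  filter_upwards [hslope.eventually (eventually_lt_nhds hL), self_mem_nhdsWithin] with x hx hzx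
  rwa [slope_neg_iff_of_le (le_of_lt hzx)] at hx

theorem HasDerivAt.crossesDownAt {L z : ℝ} (hg : HasDerivAt g L z) (hL : L < 0) (hz : g z = 0) :
    CrossesDownAt g z :=
  ⟨hz ▸ hg.eventually_nhdsLT_lt_of_neg hL, hz ▸ hg.eventually_nhdsGT_gt_of_neg hL⟩

theorem neg_of_neg_of_crossesDownAt (hg : ContinuousOn g (Ioo a b))
    (hz : ∀ z ∈ Ioo a b, g z = 0 → CrossesDownAt g z) :
    ∀ p ∈ Ioo a b, g p < 0 → ∀ x ∈ Ico p b, g x < 0 := by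
  intro p hp hgp x hx
  by_contra! hgx
  obtain ⟨c, hc, hgc, hneg⟩ := exists_first_zero hx.1 (hg.mono (Icc_subset_Ioo hp.1 hx.2)) hgp hgx
  obtain ⟨y, hpos, hy⟩ :=
    ((hz c ⟨hp.1.trans hc.1, hc.2.trans_lt hx.2⟩ hgc).1.and (Ioo_mem_nhdsLT hc.1)).exists
  exact (hneg y ⟨hy.1.le, hy.2⟩).not_gt hpos

theorem sign_trichotomy_of_crossesDownAt (hg : ContinuousOn g (Ioo a b))
    (hz : ∀ z ∈ Ioo a b, g z = 0 → CrossesDownAt g z) :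
    (∀ x ∈ Ioo a b, 0 < g x) ∨ (∀ x ∈ Ioo a b, g x < 0) ∨
      ∃ z ∈ Ioo a b, (∀ x ∈ Ioo a z, 0 < g x) ∧ g z = 0 ∧ ∀ x ∈ Ioo z b, g x < 0 := by
  have stays_neg := neg_of_neg_of_crossesDownAt hg hz
  have neg_after_zero : ∀ z ∈ Ioo a b, g z = 0 → ∀ x ∈ Ioo z b, g x < 0 := by
    intro z hz' hgz x hx
    obtain ⟨p, hgp, hp⟩ := ((hz z hz' hgz).2.and (Ioo_mem_nhdsGT hx.1)).exists
    exact stays_neg p ⟨hz'.1.trans hp.1, hp.2.trans hx.2⟩ hgp x ⟨hp.2.le, hx.2⟩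
  by_cases hzero : ∃ z ∈ Ioo a b, g z = 0
  · obtain ⟨z, hz', hgz⟩ := hzero
    refine Or.inr (Or.inr ⟨z, hz', fun x hx => ?_, hgz, neg_after_zero z hz' hgz⟩)
    have hx' : x ∈ Ioo a b := ⟨hx.1, hx.2.trans hz'.2⟩
    rcases lt_trichotomy (g x) 0 with hgx | hgx | hgx
    · exact absurd hgz (stays_neg x hx' hgx z ⟨hx.2.le, hz'.2⟩).ne
    · exact absurd hgz (neg_after_zero x hx' hgx z ⟨hx.2, hz'.2⟩).ne
    · exact hgx
  push Not at hzero
  by_cases hneg : ∃ p ∈ Ioo a b, g p < 0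
  · obtain ⟨p, hp, hgp⟩ := hneg
    refine Or.inr (Or.inl fun x hx => ?_)
    rcases le_or_gt p x with hpx | hxp
    · exact stays_neg p hp hgp x ⟨hpx, hx.2⟩
    refine (hzero x hx).lt_of_le ?_
    by_contra! hgx
    obtain ⟨z, hz', hgz⟩ := intermediate_value_Icc' hxp.le
      (hg.mono (Icc_subset_Ioo hx.1 hp.2)) ⟨hgp.le, hgx.le⟩
    exact hzero z ⟨hx.1.trans_le hz'.1, hz'.2.trans_lt hp.2⟩ hgz
  push Not at hneg
  exact Or.inl fun x hx => (hneg x hx).lt_of_ne' (hzero x hx)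

end CrossesDown

theorem DifferentiableOn.hasDerivAt_derivWithin_Icc {f : ℝ → ℝ} {a b x : ℝ}
    (hf : DifferentiableOn ℝ f (Icc a b)) (hx : x ∈ Ioo a b) :
    HasDerivAt f (derivWithin f (Icc a b) x) x :=
  (hf x (Ioo_subset_Icc_self hx)).hasDerivWithinAt.hasDerivAt (Icc_mem_nhds hx.1 hx.2)

theorem strictMonoOn_Icc_of_hasDerivAt_pos {f f' : ℝ → ℝ} {a b : ℝ}
    (hf : ContinuousOn f (Icc a b)) (hd : ∀ x ∈ Ioo a b, HasDerivAt f (f' x) x)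
    (hpos : ∀ x ∈ Ioo a b, 0 < f' x) : StrictMonoOn f (Icc a b) :=
  strictMonoOn_of_hasDerivWithinAt_pos (convex_Icc a b) hf
    (fun x hx => by rw [interior_Icc] at hx ⊢; exact (hd x hx).hasDerivWithinAt)
    (fun x hx => hpos x (by simpa using hx))

theorem strictAntiOn_Icc_of_hasDerivAt_neg {f f' : ℝ → ℝ} {a b : ℝ}
    (hf : ContinuousOn f (Icc a b)) (hd : ∀ x ∈ Ioo a b, HasDerivAt f (f' x) x)
    (hneg : ∀ x ∈ Ioo a b, f' x < 0) : StrictAntiOn f (Icc a b) :=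
  strictAntiOn_of_hasDerivWithinAt_neg (convex_Icc a b) hf
    (fun x hx => by rw [interior_Icc] at hx ⊢; exact (hd x hx).hasDerivWithinAt)
    (fun x hx => hneg x (by simpa using hx))

section EndpointDerivative

variable {g : ℝ → ℝ} {L a b : ℝ}

theorem HasDerivWithinAt.nonpos_of_forall_Ioo_le_left (hab : a < b)
    (hg : HasDerivWithinAt g L (Ioo a b) a) (hle : ∀ x ∈ Ioo a b, g x ≤ g a) : L ≤ 0 := by
  have := left_nhdsWithin_Ioo_neBot hab
  refine le_of_tendsto ((hasDerivWithinAt_iff_tendsto_slope' (by simp)).mp hg) ?_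
  filter_upwards [self_mem_nhdsWithin] with x hx
  exact (slope_nonpos_iff_of_le hx.1.le).mpr (hle x hx)

theorem HasDerivWithinAt.nonneg_of_forall_Ioo_le_right (hab : a < b)
    (hg : HasDerivWithinAt g L (Ioo a b) b) (hle : ∀ x ∈ Ioo a b, g x ≤ g b) : 0 ≤ L := by
  have := right_nhdsWithin_Ioo_neBot hab
  refine ge_of_tendsto ((hasDerivWithinAt_iff_tendsto_slope' (by simp)).mp hg) ?_
  filter_upwards [self_mem_nhdsWithin] with x hx
  rw [slope_comm]
  exact (slope_nonneg_iff_of_le hx.2.le).mpr (hle x hx)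

end EndpointDerivative

-- `θ' = g` and `θ'' = h` on `[0,1]`, with `θ''` of the sign of `θ - m`, as for a solution of
-- `μθ'' = θ(θ - m)` with `μ, θ > 0`.
structure LogisticSignData (θ g h m : ℝ → ℝ) : Prop where
  hasDerivAt : ∀ x ∈ Ioo 0 1, HasDerivAt θ (g x) x
  continuousOn : ContinuousOn θ (Icc 0 1)
  hasDerivWithinAt_deriv : ∀ x ∈ Icc 0 1, HasDerivWithinAt g (h x) (Icc 0 1) x
  sign_deriv2 : ∀ x ∈ Icc 0 1, sign (h x) = sign (θ x - m x)

namespace LogisticSignData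

variable {θ g h m : ℝ → ℝ} {a b L : ℝ}

theorem continuousOn_deriv (S : LogisticSignData θ g h m) : ContinuousOn g (Icc 0 1) :=
  fun x hx => (S.hasDerivWithinAt_deriv x hx).continuousWithinAt

theorem hasDerivAt_deriv (S : LogisticSignData θ g h m) {x : ℝ} (hx : x ∈ Ioo 0 1) :
    HasDerivAt g (h x) x :=
  (S.hasDerivWithinAt_deriv x (Ioo_subset_Icc_self hx)).hasDerivAt (Icc_mem_nhds hx.1 hx.2)

theorem lt_of_neg_between_zeros (S : LogisticSignData θ g h m) (ha : 0 ≤ a) (hab : a < b)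
    (hb : b ≤ 1) (hga : g a = 0) (hgb : g b = 0) (hneg : ∀ x ∈ Ioo a b, g x < 0) :
    m b < m a := by
  have hI : Icc a b ⊆ Icc 0 1 := Icc_subset_Icc ha hb
  have hθa : θ a - m a ≤ 0 := by
    rw [← sign_nonpos_iff, ← S.sign_deriv2 a (hI (left_mem_Icc.2 hab.le)), sign_nonpos_iff]
    exact ((S.hasDerivWithinAt_deriv a (hI (left_mem_Icc.2 hab.le))).mono
      (Ioo_subset_Icc_self.trans hI)).nonpos_of_forall_Ioo_le_left hab
      fun x hx => hga ▸ (hneg x hx).le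
  have hθb : 0 ≤ θ b - m b := by
    rw [← sign_nonneg_iff, ← S.sign_deriv2 b (hI (right_mem_Icc.2 hab.le)), sign_nonneg_iff]
    exact ((S.hasDerivWithinAt_deriv b (hI (right_mem_Icc.2 hab.le))).mono
      (Ioo_subset_Icc_self.trans hI)).nonneg_of_forall_Ioo_le_right hab
      fun x hx => hgb ▸ (hneg x hx).le
  have hθab : θ b < θ a := strictAntiOn_Icc_of_hasDerivAt_neg (S.continuousOn.mono hI)
    (fun x hx => S.hasDerivAt x (Ioo_subset_Ioo ha hb hx)) hneg
    (left_mem_Icc.2 hab.le) (right_mem_Icc.2 hab.le) hab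
  linarith

theorem lt_of_zero_of_strictMonoOn (S : LogisticSignData θ g h m) (hg0 : g 0 = 0)
    (hb : b ∈ Ioo 0 1) (hgb : g b = 0) (hm : StrictMonoOn m (Icc 0 b))
    (hmb : HasDerivAt m L b) (hL : 0 < L) : θ b < m b := by
  by_contra! hmθ
  have hgt : ∀ᶠ x in 𝓝[<] b, m x < θ x := by
    filter_upwards [((S.hasDerivAt b hb).sub hmb).eventually_nhdsLT_lt_of_neg
      (by rw [hgb]; linarith)] with x hx
    linarith [show θ b - m b < θ x - m x from hx]
  obtain ⟨p, hp, hpb⟩ := (mem_nhdsLT_iff_exists_mem_Ico_Ioo_subset hb.1).1 hgt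
  have hI : Icc p b ⊆ Icc 0 1 := Icc_subset_Icc hp.1 hb.2.le
  have hg_mono : StrictMonoOn g (Icc p b) := by
    refine strictMonoOn_Icc_of_hasDerivAt_pos (S.continuousOn_deriv.mono hI)
      (fun x hx => S.hasDerivAt_deriv (Ioo_subset_Ioo hp.1 hb.2.le hx)) fun x hx => ?_
    rw [← sign_eq_one_iff, S.sign_deriv2 x (hI (Ioo_subset_Icc_self hx)), sign_eq_one_iff,
      sub_pos]
    exact hpb hx
  have hneg_right : ∀ x ∈ Ico ((p + b) / 2) b, g x < 0 := fun x hx =>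
    hgb ▸ hg_mono ⟨by linarith [hx.1, hp.2], hx.2.le⟩ (right_mem_Icc.2 hp.2.le) hx.2
  obtain ⟨a, ha, hga, hneg_left⟩ := exists_last_zero (by linarith [hp.1, hp.2])
    (S.continuousOn_deriv.mono (Icc_subset_Icc le_rfl (by linarith [hb.2, hp.2]))) hg0.ge
    (hneg_right _ ⟨le_rfl, by linarith [hp.2]⟩)
  have hab : a < b := by linarith [ha.2, hp.2]
  have hmba : m b < m a := S.lt_of_neg_between_zeros ha.1 hab hb.2.le hga hgb fun x hx =>
    (le_or_gt x ((p + b) / 2)).elim (fun hxq => hneg_left x ⟨hx.1, hxq⟩)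
      (fun hxq => hneg_right x ⟨hxq.le, hx.2⟩)
  exact hmba.not_gt (hm ⟨ha.1, hab.le⟩ (right_mem_Icc.2 hb.1.le) hab)

theorem reflect (S : LogisticSignData θ g h m) :
    LogisticSignData (fun x => θ (1 - x)) (fun x => -g (1 - x)) (fun x => h (1 - x))
      (fun x => m (1 - x)) where
  hasDerivAt x hx := by
    simpa using (S.hasDerivAt (1 - x) (Ioo.one_sub_mem hx)).comp_const_sub 1 x
  continuousOn := S.continuousOn.comp (by fun_prop) fun _ => Icc.one_sub_mem
  hasDerivWithinAt_deriv x hx := by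
    simpa [Function.comp_def] using ((S.hasDerivWithinAt_deriv (1 - x) (Icc.one_sub_mem hx)).comp
      x ((hasDerivWithinAt_id x (Icc 0 1)).const_sub 1) fun _ => Icc.one_sub_mem).fun_neg
  sign_deriv2 x hx := S.sign_deriv2 (1 - x) (Icc.one_sub_mem hx)

theorem lt_of_zero_of_strictAntiOn (S : LogisticSignData θ g h m) (hg1 : g 1 = 0)
    (ha : a ∈ Ioo 0 1) (hga : g a = 0) (hm : StrictAntiOn m (Icc a 1))
    (hma : HasDerivAt m L a) (hL : L < 0) : θ a < m a := by
  have := S.reflect.lt_of_zero_of_strictMonoOn (b := 1 - a) (L := -L) (by simp [hg1])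
    (Ioo.one_sub_mem ha) (by simp [hga])
    (fun x hx y hy hxy => hm ⟨by linarith [hy.2], by linarith [hy.1]⟩
      ⟨by linarith [hx.2], by linarith [hx.1]⟩ (by linarith))
    (by simpa using HasDerivAt.comp_const_sub 1 (1 - a) (by rwa [sub_sub_cancel])) (by linarith)
  simpa using this

theorem lt_of_zero_of_unimodal {m' : ℝ → ℝ} {ρ z : ℝ} (S : LogisticSignData θ g h m)
    (hg0 : g 0 = 0) (hg1 : g 1 = 0) (hθρ : θ ρ < m ρ) (hinc : StrictMonoOn m (Icc 0 ρ))
    (hdec : StrictAntiOn m (Icc ρ 1))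
    (hm : ∀ x ∈ Ioo 0 1, HasDerivAt m (m' x) x) (hm'inc : ∀ x ∈ Ioo 0 ρ, 0 < m' x)
    (hm'dec : ∀ x ∈ Ioo ρ 1, m' x < 0) (hz : z ∈ Ioo 0 1) (hgz : g z = 0) : θ z < m z := by
  rcases lt_trichotomy z ρ with hzρ | rfl | hρz
  · exact S.lt_of_zero_of_strictMonoOn hg0 hz hgz (hinc.mono (Icc_subset_Icc_right hzρ.le))
      (hm z hz) (hm'inc z ⟨hz.1, hzρ⟩)
  · exact hθρ
  · exact S.lt_of_zero_of_strictAntiOn hg1 hz hgz (hdec.mono (Icc_subset_Icc_left hρz.le))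
      (hm z hz) (hm'dec z ⟨hρz, hz.2⟩)

end LogisticSignData

theorem logisticSignData_of_steadyState {μ : ℝ} {θ m : ℝ → ℝ} (hμ : 0 < μ)
    (hm : ContinuousOn m (Icc 0 1)) (hθ : ContDiffOn ℝ 2 θ (Icc 0 1))
    (hθpos : ∀ x ∈ Icc (0 : ℝ) 1, 0 < θ x)
    (hode : ∀ x ∈ Ioo (0 : ℝ) 1,
      μ * derivWithin (derivWithin θ (Icc 0 1)) (Icc 0 1) x + θ x * (m x - θ x) = 0) :
    LogisticSignData θ (derivWithin θ (Icc 0 1))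
      (derivWithin (derivWithin θ (Icc 0 1)) (Icc 0 1)) m := by
  have hI : UniqueDiffOn ℝ (Icc (0 : ℝ) 1) := uniqueDiffOn_Icc zero_lt_one
  have hg : ContDiffOn ℝ 1 (derivWithin θ (Icc 0 1)) (Icc 0 1) := hθ.derivWithin hI (by norm_num)
  have hh := (hg.derivWithin (m := 0) hI le_rfl).continuousOn
  have hode_Icc : EqOn (fun x => μ * derivWithin (derivWithin θ (Icc 0 1)) (Icc 0 1) x +
      θ x * (m x - θ x)) 0 (Icc 0 1) :=
    EqOn.of_subset_closure hode ((continuousOn_const.mul hh).add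
      (hθ.continuousOn.mul (hm.sub hθ.continuousOn))) continuousOn_const Ioo_subset_Icc_self
      (closure_Ioo zero_ne_one).ge
  refine ⟨fun x hx => (hθ.differentiableOn two_ne_zero).hasDerivAt_derivWithin_Icc hx,
    hθ.continuousOn, fun x hx => (hg.differentiableOn one_ne_zero x hx).hasDerivWithinAt,
    fun x hx => ?_⟩
  have hx' := hode_Icc hx
  simp only [Pi.zero_apply] at hx'
  rw [show derivWithin (derivWithin θ (Icc 0 1)) (Icc 0 1) x = θ x / μ * (θ x - m x) by
    field_simp; linarith, sign_mul, sign_pos (div_pos (hθpos x hx) hμ), one_mul]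

theorem theta_unimodal_general (μ : ℝ) (hμ : 0 < μ) (ρ : ℝ) (hρ : ρ ∈ Ioo (0:ℝ) 1)
    (m θ : ℝ → ℝ)
    (hm : ContDiffOn ℝ 1 m (Icc 0 1))
    (hminc : ∀ x ∈ Ico (0:ℝ) ρ, 0 < derivWithin m (Icc 0 1) x)
    (hmdec : ∀ x ∈ Ioc ρ (1:ℝ), derivWithin m (Icc 0 1) x < 0)
    (hθreg : ContDiffOn ℝ 2 θ (Icc 0 1))
    (hθpos : ∀ x ∈ Icc (0:ℝ) 1, 0 < θ x)
    (hode : ∀ x ∈ Ioo (0:ℝ) 1,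
      μ * derivWithin (derivWithin θ (Icc 0 1)) (Icc 0 1) x + θ x * (m x - θ x) = 0)
    (hbc0 : derivWithin θ (Icc 0 1) 0 = 0) (hbc1 : derivWithin θ (Icc 0 1) 1 = 0)
    (hbounds : ∀ x ∈ Icc (0:ℝ) 1,
      sInf ((fun y => max (m y) 0) '' Icc (0:ℝ) 1) < θ x ∧ θ x < sSup (m '' Icc (0:ℝ) 1)) :
    (∀ x ∈ Ioo (0:ℝ) 1, 0 < derivWithin θ (Icc 0 1) x) ∨
    (∀ x ∈ Ioo (0:ℝ) 1, derivWithin θ (Icc 0 1) x < 0) ∨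
    (∃ x1 ∈ Ioo (0:ℝ) 1,
      (∀ x ∈ Ioo (0:ℝ) x1, 0 < derivWithin θ (Icc 0 1) x) ∧
      derivWithin θ (Icc 0 1) x1 = 0 ∧
      derivWithin (derivWithin θ (Icc 0 1)) (Icc 0 1) x1 < 0 ∧
      (∀ x ∈ Ioo x1 (1:ℝ), derivWithin θ (Icc 0 1) x < 0)) := by
  have S := logisticSignData_of_steadyState hμ hm.continuousOn hθreg hθpos hode
  have hm' x (hx : x ∈ Ioo (0 : ℝ) 1) :=
    (hm.differentiableOn one_ne_zero).hasDerivAt_derivWithin_Icc hx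
  have hinc : StrictMonoOn m (Icc 0 ρ) := strictMonoOn_Icc_of_hasDerivAt_pos
    (hm.continuousOn.mono (Icc_subset_Icc_right hρ.2.le))
    (fun x hx => hm' x ⟨hx.1, hx.2.trans hρ.2⟩) fun x hx => hminc x ⟨hx.1.le, hx.2⟩
  have hdec : StrictAntiOn m (Icc ρ 1) := strictAntiOn_Icc_of_hasDerivAt_neg
    (hm.continuousOn.mono (Icc_subset_Icc_left hρ.1.le))
    (fun x hx => hm' x ⟨hρ.1.trans hx.1, hx.2⟩) fun x hx => hmdec x ⟨hx.1, hx.2.le⟩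
  have hθρ : θ ρ < m ρ := by
    have hmax : IsGreatest (m '' Icc 0 1) (m ρ) := ⟨mem_image_of_mem m (Ioo_subset_Icc_self hρ),
      forall_mem_image.2 fun x hx => (le_total x ρ).elim
        (fun hxρ => hinc.monotoneOn ⟨hx.1, hxρ⟩ (right_mem_Icc.2 hρ.1.le) hxρ)
        (fun hρx => hdec.antitoneOn (left_mem_Icc.2 hρ.2.le) ⟨hρx, hx.2⟩ hρx)⟩
    simpa [hmax.csSup_eq] using (hbounds ρ (Ioo_subset_Icc_self hρ)).2
  have hdd_neg z (hz : z ∈ Ioo (0 : ℝ) 1) (hgz : derivWithin θ (Icc 0 1) z = 0) :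
      derivWithin (derivWithin θ (Icc 0 1)) (Icc 0 1) z < 0 := by
    rw [← sign_eq_neg_one_iff, S.sign_deriv2 z (Ioo_subset_Icc_self hz), sign_eq_neg_one_iff,
      sub_neg]
    exact S.lt_of_zero_of_unimodal hbc0 hbc1 hθρ hinc hdec hm'
      (fun x hx => hminc x ⟨hx.1.le, hx.2⟩) (fun x hx => hmdec x ⟨hx.1, hx.2.le⟩) hz hgz
  rcases sign_trichotomy_of_crossesDownAt (S.continuousOn_deriv.mono Ioo_subset_Icc_self)
    fun z hz hgz => (S.hasDerivAt_deriv hz).crossesDownAt (hdd_neg z hz hgz) hgz with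
    hpos | hneg | ⟨z, hz, hpos, hgz, hneg⟩
  · exact Or.inl hpos
  · exact Or.inr (Or.inl hneg)
  · exact Or.inr (Or.inr ⟨z, hz, hpos, hgz, hdd_neg z hz hgz, hneg⟩)

/-- For a unimodal resource `m` (increasing then decreasing), the derivative of the
Neumann logistic steady state changes sign at most once: `θ' > 0` on `(0,1)`, or
`θ' < 0` on `(0,1)`, or there is an interior nondegenerate maximum point. -/
theorem theta_unimodal (μ : ℝ) (hμ : 0 < μ) (ρ : ℝ) (hρ : ρ ∈ Ioo (0:ℝ) 1)
    (m θ : ℝ → ℝ)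
    (hm : ContDiffOn ℝ 1 m (Icc 0 1))
    (hminc : ∀ x ∈ Ico (0:ℝ) ρ, 0 < derivWithin m (Icc 0 1) x)
    (hmdec : ∀ x ∈ Ioc ρ (1:ℝ), derivWithin m (Icc 0 1) x < 0)
    (hθreg : ContDiffOn ℝ 2 θ (Icc 0 1))
    (hθpos : ∀ x ∈ Icc (0:ℝ) 1, 0 < θ x)
    (hnonconst : ∃ x ∈ Icc (0:ℝ) 1, ∃ y ∈ Icc (0:ℝ) 1, θ x ≠ θ y)
    (hode : ∀ x ∈ Ioo (0:ℝ) 1,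
      μ * derivWithin (derivWithin θ (Icc 0 1)) (Icc 0 1) x + θ x * (m x - θ x) = 0)
    (hbc0 : derivWithin θ (Icc 0 1) 0 = 0) (hbc1 : derivWithin θ (Icc 0 1) 1 = 0)
    (hbounds : ∀ x ∈ Icc (0:ℝ) 1,
      sInf ((fun y => max (m y) 0) '' Icc (0:ℝ) 1) < θ x ∧ θ x < sSup (m '' Icc (0:ℝ) 1)) :
    (∀ x ∈ Ioo (0:ℝ) 1, 0 < derivWithin θ (Icc 0 1) x) ∨
    (∀ x ∈ Ioo (0:ℝ) 1, derivWithin θ (Icc 0 1) x < 0) ∨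
    (∃ x1 ∈ Ioo (0:ℝ) 1,
      (∀ x ∈ Ioo (0:ℝ) x1, 0 < derivWithin θ (Icc 0 1) x) ∧
      derivWithin θ (Icc 0 1) x1 = 0 ∧
      derivWithin (derivWithin θ (Icc 0 1)) (Icc 0 1) x1 < 0 ∧
      (∀ x ∈ Ioo x1 (1:ℝ), derivWithin θ (Icc 0 1) x < 0)) :=
  theta_unimodal_general μ hμ ρ hρ m θ hm hminc hmdec hθreg hθpos hode hbc0 hbc1 hbounds
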